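/- Let v ∈ ℤ³ be primitive with d² ∣ ‖v‖². Then for any a, b in Γ(v,d) = {x ∈ ℤ³ : d ∣ x × v and d² ∣ (x × v) × v}, the dot product a · b is divisible by d². -/

import Mathlib

def dot3 (a b : Fin 3 → ℤ) : ℤ := a 0 * b 0 + a 1 * b 1 + a 2 * b 2

def cross3 (a b : Fin 3 → ℤ) : Fin 3 → ℤ :=
  ![a 1 * b 2 - a 2 * b 1, a 2 * b 0 - a 0 * b 2, a 0 * b 1 - a 1 * b 0]

lemma cross3_add_left (a b v : Fin 3 → ℤ) :
    cross3 (a + b) v = cross3 a v + cross3 b v := by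
  funext i; fin_cases i <;> simp [cross3] <;> ring

lemma cross3_zero_left (v : Fin 3 → ℤ) : cross3 0 v = 0 := by
  funext i; fin_cases i <;> simp [cross3]

lemma cross3_neg_left (a v : Fin 3 → ℤ) : cross3 (-a) v = -(cross3 a v) := by
  funext i; fin_cases i <;> simp [cross3] <;> ring

/-- The lattice `v^⊥` of integer vectors orthogonal to `v`. -/
def perpSub (v : Fin 3 → ℤ) : AddSubgroup (Fin 3 → ℤ) where
  carrier := {a | dot3 a v = 0}
  zero_mem' := by simp [dot3]
  add_mem' := by
    intro a b ha hb
    simp only [Set.mem_setOf_eq, dot3, Pi.add_apply] at *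
    linarith
  neg_mem' := by
    intro a ha
    simp only [Set.mem_setOf_eq, dot3, Pi.neg_apply] at *
    linarith

/-- The subgroup `M(v,d) = {a ∈ v^⊥ : d ∣ a × v}`. -/
def MSub (v : Fin 3 → ℤ) (d : ℤ) : AddSubgroup (Fin 3 → ℤ) where
  carrier := {a | dot3 a v = 0 ∧ ∀ i, d ∣ cross3 a v i}
  zero_mem' := ⟨by simp [dot3], by intro i; rw [cross3_zero_left]; simp⟩
  add_mem' := by
    rintro a b ⟨ha, ha'⟩ ⟨hb, hb'⟩
    refine ⟨?_, ?_⟩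
    · simp only [dot3, Pi.add_apply] at *; linarith
    · intro i; rw [cross3_add_left]; exact dvd_add (ha' i) (hb' i)
  neg_mem' := by
    rintro a ⟨ha, ha'⟩
    refine ⟨?_, ?_⟩
    · simp only [dot3, Pi.neg_apply] at *; linarith
    · intro i; rw [cross3_neg_left]; simpa using (ha' i).neg_right

/-- The subgroup `Γ(v,d) = {a : d ∣ a × v, d² ∣ (a × v) × v}`. -/
def GammaSub (v : Fin 3 → ℤ) (d : ℤ) : AddSubgroup (Fin 3 → ℤ) where
  carrier := {a | (∀ i, d ∣ cross3 a v i) ∧ ∀ i, d^2 ∣ cross3 (cross3 a v) v i}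
  zero_mem' := by
    constructor <;> intro i <;> rw [cross3_zero_left] <;> simp [cross3_zero_left]
  add_mem' := by
    rintro a b ⟨ha, ha'⟩ ⟨hb, hb'⟩
    refine ⟨fun i => ?_, fun i => ?_⟩
    · rw [cross3_add_left]; exact dvd_add (ha i) (hb i)
    · rw [cross3_add_left, cross3_add_left]; exact dvd_add (ha' i) (hb' i)
  neg_mem' := by
    rintro a ⟨ha, ha'⟩
    refine ⟨fun i => ?_, fun i => ?_⟩
    · rw [cross3_neg_left]; simpa using (ha i).neg_right
    · rw [cross3_neg_left, cross3_neg_left]; simpa using (ha' i).neg_right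

def Primitive (v : Fin 3 → ℤ) : Prop := Int.gcd (Int.gcd (v 0) (v 1)) (v 2) = 1

/-!
Since `v` is primitive there is `c` with `c · v = 1`, and the vector triple product gives
`a = (a · c) v + c × (a × v)`; so `d ∣ a × v` means `a = t v + d a'`. Expanding
`(a × v) × v = (a · v) v - ‖v‖² a` shows `d² ∣ a · v`, hence `d ∣ v · a'`. Writing
`b = s v + d b'` in the same way, every term of `a · b = ts ‖v‖² + d t (v · b') + d s (v · a') +
d² (a' · b')` is divisible by `d²`.
-/

open Matrix

lemma dot3_eq_dotProduct (a b : Fin 3 → ℤ) : dot3 a b = a ⬝ᵥ b :=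
  (vec3_dotProduct a b).symm

lemma mem_GammaSub_iff {v a : Fin 3 → ℤ} {d : ℤ} :
    a ∈ GammaSub v d ↔ (∀ i, d ∣ (a ⨯₃ v) i) ∧ ∀ i, d ^ 2 ∣ (a ⨯₃ v ⨯₃ v) i :=
  Iff.rfl

lemma Primitive.exists_dotProduct_eq_one {v : Fin 3 → ℤ} (hv : Primitive v) :
    ∃ c, c ⬝ᵥ v = 1 := by
  obtain ⟨x, y, hxy⟩ := Int.isCoprime_iff_gcd_eq_one.mpr hv
  refine ⟨![x * Int.gcdA (v 0) (v 1), x * Int.gcdB (v 0) (v 1), y], ?_⟩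
  rw [vec3_dotProduct]
  simp only [cons_val_zero, cons_val_one, cons_val_two, head_cons, tail_cons]
  linear_combination hxy - x * Int.gcd_eq_gcd_ab (v 0) (v 1)

lemma Primitive.ne_zero {v : Fin 3 → ℤ} (hv : Primitive v) : v ≠ 0 := by
  rintro rfl
  simp [Primitive] at hv

section CommRing

variable {R : Type*} [CommRing R]

lemma dvd_of_forall_dvd_mul_apply {n : Type*} [Fintype n] {v c : n → R} (hc : c ⬝ᵥ v = 1)
    {k x : R} (h : ∀ i, k ∣ x * v i) : k ∣ x := by
  have hx : x = ∑ i, c i * (x * v i) := calc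
    x = x * (c ⬝ᵥ v) := by rw [hc, mul_one]
    _ = ∑ i, c i * (x * v i) := by
      rw [dotProduct, Finset.mul_sum]
      exact Finset.sum_congr rfl fun i _ => by ring
  rw [hx]
  exact Finset.dvd_sum fun i _ => (h i).mul_left _

lemma eq_smul_add_cross_cross {v c : Fin 3 → R} (hc : c ⬝ᵥ v = 1) (a : Fin 3 → R) :
    a = (a ⬝ᵥ c) • v + c ⨯₃ (a ⨯₃ v) := by
  rw [cross_cross_eq_smul_sub_smul', hc, one_smul, add_sub_cancel]

lemma exists_eq_smul_add_smul_of_dvd_cross {v c : Fin 3 → R} (hc : c ⬝ᵥ v = 1) {d : R}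
    {a : Fin 3 → R} (h : ∀ i, d ∣ (a ⨯₃ v) i) :
    ∃ (t : R) (a' : Fin 3 → R), a = t • v + d • a' := by
  choose w hw using h
  have hw' : a ⨯₃ v = d • w := funext hw
  refine ⟨a ⬝ᵥ c, c ⨯₃ w, ?_⟩
  rw [← map_smul, ← hw']
  exact eq_smul_add_cross_cross hc a

lemma dvd_dotProduct_of_dvd_cross_cross {v c : Fin 3 → R} (hc : c ⬝ᵥ v = 1) {k : R}
    (hN : k ∣ v ⬝ᵥ v) {a : Fin 3 → R} (h : ∀ i, k ∣ (a ⨯₃ v ⨯₃ v) i) : k ∣ a ⬝ᵥ v := by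
  refine dvd_of_forall_dvd_mul_apply hc fun i => ?_
  have hi : a ⬝ᵥ v * v i = (a ⨯₃ v ⨯₃ v) i + v ⬝ᵥ v * a i := by
    simp [cross_cross_eq_smul_sub_smul]
  rw [hi]
  exact dvd_add (h i) (hN.mul_right _)

lemma sq_dvd_dotProduct_smul_add_smul {d t s : R} {v a b : Fin 3 → R} (hN : d ^ 2 ∣ v ⬝ᵥ v)
    (ha : d ∣ v ⬝ᵥ a) (hb : d ∣ v ⬝ᵥ b) :
    d ^ 2 ∣ (t • v + d • a) ⬝ᵥ (s • v + d • b) := by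
  have expand : (t • v + d • a) ⬝ᵥ (s • v + d • b) =
      t * s * (v ⬝ᵥ v) + d * (t * (v ⬝ᵥ b) + s * (v ⬝ᵥ a)) + d ^ 2 * (a ⬝ᵥ b) := by
    simp only [add_dotProduct, dotProduct_add, smul_dotProduct, dotProduct_smul, smul_eq_mul,
      dotProduct_comm a v]
    ring
  have hmid : d ^ 2 ∣ d * (t * (v ⬝ᵥ b) + s * (v ⬝ᵥ a)) := by
    rw [sq]
    exact mul_dvd_mul_left d (dvd_add (hb.mul_left t) (ha.mul_left s))
  rw [expand]
  exact dvd_add (dvd_add (hN.mul_left _) hmid) (dvd_mul_right _ _)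

end CommRing

lemma exists_eq_smul_add_smul_of_mem_GammaSub {v c : Fin 3 → ℤ} (hc : c ⬝ᵥ v = 1) {d : ℤ}
    (hd : d ≠ 0) (hN : d ^ 2 ∣ v ⬝ᵥ v) {a : Fin 3 → ℤ} (ha : a ∈ GammaSub v d) :
    ∃ (t : ℤ) (a' : Fin 3 → ℤ), a = t • v + d • a' ∧ d ∣ v ⬝ᵥ a' := by
  obtain ⟨hcross, hcross2⟩ := mem_GammaSub_iff.mp ha
  obtain ⟨t, a', rfl⟩ := exists_eq_smul_add_smul_of_dvd_cross hc hcross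
  refine ⟨t, a', rfl, ?_⟩
  have hdot : d ^ 2 ∣ (t • v + d • a') ⬝ᵥ v := dvd_dotProduct_of_dvd_cross_cross hc hN hcross2
  rw [add_dotProduct, smul_dotProduct, smul_dotProduct, smul_eq_mul, smul_eq_mul,
    dotProduct_comm a' v, dvd_add_right (hN.mul_left t), sq] at hdot
  exact (mul_dvd_mul_iff_left hd).mp hdot

/-- For `a, b ∈ Γ(v,d)`, the dot product `a · b` is divisible by `d²`. -/
theorem Gamma_dot_div (v : Fin 3 → ℤ) (hv : Primitive v)
    (d : ℤ) (hdvd : d^2 ∣ dot3 v v) (a b : Fin 3 → ℤ)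
    (ha : a ∈ GammaSub v d) (hb : b ∈ GammaSub v d) :
    d^2 ∣ dot3 a b := by
  rw [dot3_eq_dotProduct] at hdvd ⊢
  have hd : d ≠ 0 := by
    rintro rfl
    have hvv : v ⬝ᵥ v = 0 := by simpa using hdvd
    exact hv.ne_zero (dotProduct_self_eq_zero.mp hvv)
  obtain ⟨c, hc⟩ := hv.exists_dotProduct_eq_one
  obtain ⟨t, a', rfl, ha'⟩ := exists_eq_smul_add_smul_of_mem_GammaSub hc hd hdvd ha
  obtain ⟨s, b', rfl, hb'⟩ := exists_eq_smul_add_smul_of_mem_GammaSub hc hd hdvd hb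
  exact sq_dvd_dotProduct_smul_add_smul hdvd ha' hb'
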